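/- With t_d(s) defined by 1 - Σ_{d≥1} θ^{d-1} t_d(s) = exp(- Σ_{a≥0} θ^a s_a), the Taylor coefficients at s = 0 are given by ∂^k t_d / (∂s_{a_1} ⋯ ∂s_{a_k}) |_{s=0} = (-1)^{k+1} δ_{d, a_1 + ⋯ + a_k + 1}, for any k ≥ 1 and nonnegative integers a_1, ..., a_k. -/

import Mathlib

noncomputable section
open MvPowerSeries
open scoped Classical

/-- total degree of a monomial -/
def mdeg {σ : Type*} (m : σ →₀ ℕ) : ℕ := m.sum fun _ n => n

/-- formal partial derivative with respect to the variable `i` -/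
def pd {σ : Type*} {R : Type*} [CommRing R] (i : σ) (f : MvPowerSeries σ R) :
    MvPowerSeries σ R :=
  fun m => ((m i + 1 : ℕ) : R) * MvPowerSeries.coeff (m + Finsupp.single i 1) f

/-- formal exponential of a power series (coefficientwise stable sum) -/
def fexp {σ : Type*} {A : Type*} [CommRing A] [Algebra ℚ A] (u : MvPowerSeries σ A) :
    MvPowerSeries σ A :=
  fun m => ∑ k ∈ Finset.range (mdeg m + 1),
    (k.factorial : ℚ)⁻¹ • MvPowerSeries.coeff m (u ^ k)

/-- restriction of a monomial in the variables `θ ⊕ β` to the `β`-variables -/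
def res {β : Type*} (m : (Unit ⊕ β) →₀ ℕ) : β →₀ ℕ :=
  Finsupp.comapDomain Sum.inr m Sum.inr_injective.injOn

/-- the series `1 - ∑_{d ≥ 1} θ^{d-1} t_d` -/
def genT {β : Type*} {R : Type*} [CommRing R] (t : ℕ → MvPowerSeries β R) :
    MvPowerSeries (Unit ⊕ β) R :=
  fun m => (if m = 0 then 1 else 0) -
    MvPowerSeries.coeff (res m) (t (m (Sum.inl ()) + 1))

/-- the series `-∑_{a ≥ 0} θ^a s_a` -/
def expArg : MvPowerSeries (Unit ⊕ ℕ) ℚ :=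
  fun m => ∑ᶠ a : ℕ,
    if m = Finsupp.single (Sum.inl ()) a + Finsupp.single (Sum.inr a) 1 then (-1 : ℚ) else 0

/-- the defining identity `1 - ∑_{d≥1} θ^{d-1} t_d(s) = exp(-∑_{a≥0} θ^a s_a)` -/
def DefIdent (t : ℕ → MvPowerSeries ℕ ℚ) : Prop := genT t = fexp expArg

/-!
Write `E = -∑_b θ^b s_b` for the exponent. A monomial `θ^w s^m` occurs in `E^j` only when
`|m| = j` and `w = ∑ b m_b`, and then with coefficient `(-1)^j` times `j!/m!`, the number of
orderings of the factors; this is an induction on `j`, peeling one factor `θ^b s_b` off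
`E^{j+1}`. Hence the coefficient of `θ^w s^m` in `exp E` is `(-1)^|m| [w = ∑ b m_b] / m!`.
For `m ≠ 0` the same coefficient of the left-hand side is minus the coefficient of `s^m` in
`t_{w+1}`, and the iterated derivative at `0` is `m!` times the coefficient of `s^m` with
`m = e_{a_1} + ⋯ + e_{a_k}`.
-/

section Monomial

variable {σ : Type*}

def mfact (m : σ →₀ ℕ) : ℕ := m.prod fun _ c => c.factorial

@[simp] lemma mfact_zero : mfact (0 : σ →₀ ℕ) = 1 := Finsupp.prod_zero_index

lemma mfact_add_single_one (n : σ →₀ ℕ) (i : σ) :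
    mfact (n + Finsupp.single i 1) = (n i + 1) * mfact n := by
  have split (m : σ →₀ ℕ) := (Finsupp.mul_prod_erase' m i (fun _ c => c.factorial)
    fun _ => Nat.factorial_zero).symm
  rw [mfact, mfact, split, split n, Finsupp.erase_add, Finsupp.erase_single, add_zero,
    Finsupp.add_apply, Finsupp.single_eq_same, Nat.factorial_succ, mul_assoc]

lemma mfact_eq_mul_mfact_sub_single {r : σ →₀ ℕ} {b : σ} (hb : r b ≠ 0) :
    mfact r = r b * mfact (r - Finsupp.single b 1) := by
  have hle : Finsupp.single b 1 ≤ r := Finsupp.single_le_iff.2 (Nat.one_le_iff_ne_zero.2 hb)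
  conv_lhs => rw [← tsub_add_cancel_of_le hle]
  rw [mfact_add_single_one, Finsupp.tsub_apply, Finsupp.single_eq_same, Nat.sub_add_cancel]
  omega

lemma mdeg_eq_degree (m : σ →₀ ℕ) : mdeg m = m.degree := rfl

end Monomial

lemma mfact_mul_coeff_foldr_pd {σ R : Type*} [CommRing R] (l : List σ)
    (f : MvPowerSeries σ R) (n : σ →₀ ℕ) :
    (mfact n : R) * coeff n (l.foldr pd f) =
      mfact (n + (l.map fun i => Finsupp.single i 1).sum) *
        coeff (n + (l.map fun i => Finsupp.single i 1).sum) f := by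
  induction l generalizing n with
  | nil => simp
  | cons i l ih =>
    rw [List.map_cons, List.sum_cons, ← add_assoc, ← ih, mfact_add_single_one]
    change _ * (((n i + 1 : ℕ) : R) * _) = _
    push_cast
    ring

section ThetaMonomial

open Finsupp

-- the exponent of `θ^w s^m`, the variable `θ` being `Sum.inl ()`
def thetaMon (w : ℕ) (m : ℕ →₀ ℕ) : (Unit ⊕ ℕ) →₀ ℕ :=
  single (Sum.inl ()) w + mapDomain Sum.inr m

@[simp] lemma res_apply (n : (Unit ⊕ ℕ) →₀ ℕ) (b : ℕ) : res n b = n (Sum.inr b) := rfl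

lemma res_zero : res (0 : (Unit ⊕ ℕ) →₀ ℕ) = 0 := by
  ext b
  rfl

lemma res_sub (n n' : (Unit ⊕ ℕ) →₀ ℕ) : res (n - n') = res n - res n' := by
  ext b
  rfl

@[simp] lemma thetaMon_inl (w : ℕ) (m : ℕ →₀ ℕ) : thetaMon w m (Sum.inl ()) = w := by
  simp [thetaMon, mapDomain_of_notMem_range]

@[simp] lemma thetaMon_inr (w : ℕ) (m : ℕ →₀ ℕ) (b : ℕ) :
    thetaMon w m (Sum.inr b) = m b := by
  simp [thetaMon, Sum.inr_injective]

@[simp] lemma res_thetaMon (w : ℕ) (m : ℕ →₀ ℕ) : res (thetaMon w m) = m := by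
  ext b
  rw [res_apply, thetaMon_inr]

lemma eq_thetaMon_iff {n : (Unit ⊕ ℕ) →₀ ℕ} {w : ℕ} {m : ℕ →₀ ℕ} :
    n = thetaMon w m ↔ n (Sum.inl ()) = w ∧ res n = m := by
  refine ⟨by rintro rfl; simp, fun ⟨hw, hm⟩ => ?_⟩
  ext (⟨⟨⟩⟩ | b)
  · rw [hw, thetaMon_inl]
  · rw [thetaMon_inr, ← hm, res_apply]

lemma thetaMon_le_iff {n : (Unit ⊕ ℕ) →₀ ℕ} {w : ℕ} {m : ℕ →₀ ℕ} :
    thetaMon w m ≤ n ↔ w ≤ n (Sum.inl ()) ∧ m ≤ res n := by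
  refine ⟨fun h => ⟨by simpa using h (Sum.inl ()), fun b => by simpa using h (Sum.inr b)⟩,
    fun ⟨hw, hm⟩ => ?_⟩
  rintro (⟨⟨⟩⟩ | b)
  · simpa using hw
  · simpa using hm b

lemma degree_thetaMon (w : ℕ) (m : ℕ →₀ ℕ) : (thetaMon w m).degree = w + m.degree := by
  simp [thetaMon, degree_mapDomain]

abbrev expArgMon (b : ℕ) : (Unit ⊕ ℕ) →₀ ℕ := thetaMon b (single b 1)

lemma coeff_expArg (n : (Unit ⊕ ℕ) →₀ ℕ) :
    coeff n expArg = if n = expArgMon (n (Sum.inl ())) then -1 else 0 := by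
  have hmon (b : ℕ) : single (Sum.inl ()) b + single (Sum.inr b) 1 = expArgMon b := by
    rw [expArgMon, thetaMon, mapDomain_single]
  refine (finsum_eq_single _ (n (Sum.inl ())) fun b hb => if_neg ?_).trans (by rw [hmon])
  rw [hmon, eq_thetaMon_iff]
  exact fun h => hb h.1.symm

def expArgIdx (n : (Unit ⊕ ℕ) →₀ ℕ) : Finset ℕ :=
  (res n).support.filter (· ≤ n (Sum.inl ()))

lemma mem_expArgIdx {n : (Unit ⊕ ℕ) →₀ ℕ} {b : ℕ} :
    b ∈ expArgIdx n ↔ expArgMon b ≤ n := by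
  rw [expArgIdx, Finset.mem_filter, thetaMon_le_iff, single_le_iff, mem_support_iff,
    Nat.one_le_iff_ne_zero, and_comm]

lemma coeff_expArg_mul (g : MvPowerSeries (Unit ⊕ ℕ) ℚ) (n : (Unit ⊕ ℕ) →₀ ℕ) :
    coeff n (expArg * g) = ∑ b ∈ expArgIdx n, -coeff (n - expArgMon b) g := by
  rw [coeff_mul]
  symm
  refine Finset.sum_bij_ne_zero (fun b _ _ => (expArgMon b, n - expArgMon b))
    (fun b hb _ => Finset.HasAntidiagonal.mem_antidiagonal.2
      (add_tsub_cancel_of_le (mem_expArgIdx.1 hb)))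
    (fun b _ _ b' _ _ h => by simpa using congrArg (fun p => p.1 (Sum.inl ())) h) ?_ ?_
  · rintro ⟨p, q⟩ hpq hne
    rw [Finset.HasAntidiagonal.mem_antidiagonal] at hpq
    have hp : p = expArgMon (p (Sum.inl ())) := by
      by_contra h
      rw [coeff_expArg, if_neg h, zero_mul] at hne
      exact hne rfl
    have hq : n - expArgMon (p (Sum.inl ())) = q := by rw [← hp, ← hpq, add_tsub_cancel_left]
    refine ⟨p (Sum.inl ()), mem_expArgIdx.2 (hp ▸ hpq ▸ le_self_add), ?_,
      by rw [hq, ← hp]⟩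
    rw [hq]
    exact neg_ne_zero.2 (right_ne_zero_of_mul hne)
  · intro b _ _
    rw [coeff_expArg, if_pos (by simp), neg_one_mul]

lemma expArgIdx_eq_support {n : (Unit ⊕ ℕ) →₀ ℕ}
    (h : n (Sum.inl ()) = weight id (res n)) :
    expArgIdx n = (res n).support :=
  Finset.filter_true_of_mem fun _ hb => h ▸ le_weight_of_ne_zero' id (mem_support_iff.1 hb)

lemma degree_weight_sub_single_iff {r : ℕ →₀ ℕ} {b w j : ℕ} (hb : r b ≠ 0)
    (hw : b ≤ w) :
    ((r - single b 1).degree = j ∧ w - b = weight id (r - single b 1)) ↔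
      (r.degree = j + 1 ∧ w = weight id r) := by
  have hr : r = (r - single b 1) + single b 1 :=
    (tsub_add_cancel_of_le (single_le_iff.2 (Nat.one_le_iff_ne_zero.2 hb))).symm
  have hdeg : r.degree = (r - single b 1).degree + 1 := by
    conv_lhs => rw [hr]
    rw [map_add, degree_single]
  have hwt : weight id r = weight id (r - single b 1) + b := by
    conv_lhs => rw [hr]
    rw [map_add, weight_single, id, one_smul]
  omega

lemma eq_zero_iff_degree_res_eq_zero_and_inl_eq_weight {n : (Unit ⊕ ℕ) →₀ ℕ} :
    n = 0 ↔ (res n).degree = 0 ∧ n (Sum.inl ()) = weight id (res n) := by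
  have hzero : (0 : (Unit ⊕ ℕ) →₀ ℕ) = thetaMon 0 0 := by simp [thetaMon]
  rw [hzero, eq_thetaMon_iff, degree_eq_zero_iff]
  constructor <;> rintro ⟨h1, h2⟩ <;> simp_all

lemma mfact_mul_coeff_expArg_pow (j : ℕ) (n : (Unit ⊕ ℕ) →₀ ℕ) :
    (mfact (res n) : ℚ) * coeff n (expArg ^ j) =
      (-1) ^ j * j.factorial *
        if (res n).degree = j ∧ n (Sum.inl ()) = weight id (res n) then 1 else 0 := by
  induction j generalizing n with
  | zero =>
    rw [pow_zero, coeff_one, ← if_congr eq_zero_iff_degree_res_eq_zero_and_inl_eq_weight rfl rfl]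
    split_ifs with h
    · simp [h, res_zero]
    · simp
  | succ j ih =>
    have hterm : ∀ b ∈ expArgIdx n,
        (mfact (res n) : ℚ) * -coeff (n - expArgMon b) (expArg ^ j) =
          -((res n b : ℚ) * ((-1) ^ j * j.factorial *
            if (res n).degree = j + 1 ∧ n (Sum.inl ()) = weight id (res n) then 1 else 0)) := by
      intro b hb
      obtain ⟨hbw, hb⟩ := thetaMon_le_iff.1 (mem_expArgIdx.1 hb)
      rw [single_le_iff, Nat.one_le_iff_ne_zero] at hb
      have hprev := ih (n - expArgMon b)
      rw [res_sub, res_thetaMon, tsub_apply, thetaMon_inl,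
        if_congr (degree_weight_sub_single_iff hb hbw) rfl rfl] at hprev
      rw [mfact_eq_mul_mfact_sub_single hb, ← hprev]
      push_cast
      ring
    rw [pow_succ', coeff_expArg_mul, Finset.mul_sum, Finset.sum_congr rfl hterm,
      Finset.sum_neg_distrib, ← Finset.sum_mul]
    split_ifs with h
    · rw [expArgIdx_eq_support h.2, ← Nat.cast_sum, ← degree_apply, h.1, Nat.factorial_succ]
      push_cast
      ring
    · simp

lemma mfact_mul_fexp_expArg_thetaMon (w : ℕ) (m : ℕ →₀ ℕ) :
    (mfact m : ℚ) * fexp expArg (thetaMon w m) =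
      (-1) ^ m.degree * if w = weight id m then 1 else 0 := by
  have hpow (j : ℕ) := mfact_mul_coeff_expArg_pow j (thetaMon w m)
  simp only [res_thetaMon, thetaMon_inl] at hpow
  change _ * ∑ j ∈ Finset.range (mdeg (thetaMon w m) + 1), _ = _
  have hmem : m.degree ∈ Finset.range (mdeg (thetaMon w m) + 1) := by
    rw [Finset.mem_range, mdeg_eq_degree, degree_thetaMon]
    omega
  rw [Finset.mul_sum, Finset.sum_eq_single_of_mem m.degree hmem]
  · rw [smul_eq_mul, mul_left_comm, hpow, if_congr (and_iff_right rfl) rfl rfl]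
    field_simp
  · intro j _ hj
    rw [smul_eq_mul, mul_left_comm, hpow, if_neg fun h => hj h.1.symm]
    simp

end ThetaMonomial

lemma coeff_eq_neg_fexp_of_defIdent {t : ℕ → MvPowerSeries ℕ ℚ} (ht : DefIdent t) (w : ℕ)
    {m : ℕ →₀ ℕ} (hm : m ≠ 0) : coeff m (t (w + 1)) = -fexp expArg (thetaMon w m) := by
  have hne : thetaMon w m ≠ 0 := fun h => hm (by simpa [res_zero] using congrArg res h)
  rw [DefIdent] at ht
  rw [← ht]
  unfold genT
  rw [if_neg hne, res_thetaMon, thetaMon_inl, zero_sub, neg_neg]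

theorem stmt3 (t : ℕ → MvPowerSeries ℕ ℚ) (ht : DefIdent t)
    (k : ℕ) (hk : 1 ≤ k) (a : Fin k → ℕ) (d : ℕ) (hd : 1 ≤ d) :
    MvPowerSeries.constantCoeff (List.foldr pd (t d) (List.ofFn a)) =
      (-1 : ℚ) ^ (k + 1) * (if d = (∑ i, a i) + 1 then 1 else 0) := by
  obtain ⟨w, rfl⟩ := Nat.exists_eq_add_of_le' hd
  set m : ℕ →₀ ℕ := ∑ i, Finsupp.single (a i) 1
  have hdeg : m.degree = k := by simp [m]
  have hwt : Finsupp.weight id m = ∑ i, a i := by simp [m, Finsupp.weight_single]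
  have hm : m ≠ 0 := fun h => by rw [h, map_zero] at hdeg; omega
  have hcoeff := mfact_mul_coeff_foldr_pd (List.ofFn a) (t (w + 1)) 0
  have hsum : ((List.ofFn a).map fun i => Finsupp.single i 1).sum = m := by
    rw [List.map_ofFn, List.sum_ofFn]
    rfl
  rw [hsum, mfact_zero, zero_add, Nat.cast_one, one_mul] at hcoeff
  rw [← coeff_zero_eq_constantCoeff_apply, hcoeff, coeff_eq_neg_fexp_of_defIdent ht w hm, mul_neg,
    mfact_mul_fexp_expArg_thetaMon, hdeg, hwt, pow_succ]
  simp only [add_left_inj]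
  split_ifs <;> ring
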